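/- For y ~ N(μ, B), the second moment of the per-observation score with respect to the variance parameter satisfies E[ ( (y − μ)² s(y)/B² − s(y)/B + α V^α/((α+1)^{3/2} B) )² ] = (V^{2α}/B²) { 2(2α² + 1)/(2α+1)^{5/2} − α²/(α+1)³ }. -/

import Mathlib

open MeasureTheory Real

lemma abs_rpow_natCast' (x : ℝ) (n : ℕ) : |x ^ (n : ℝ)| = |x| ^ n := by
  rcases le_or_gt 0 x with hx | hx
  · rw [Real.rpow_natCast, abs_pow]
  · rw [Real.rpow_def_of_neg hx, abs_mul, Real.abs_exp]
    have h1 : |Real.cos ((n:ℝ) * π)| = 1 := by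
      have := Real.abs_cos_int_mul_pi (n : ℤ)
      simpa using this
    rw [h1, mul_one, mul_comm, Real.exp_nat_mul, ← Real.log_abs,
      Real.exp_log (abs_pos.mpr hx.ne)]

lemma integrable_pow_mul_gaussian {b : ℝ} (hb : 0 < b) (n : ℕ) :
    Integrable (fun x : ℝ => x ^ n * Real.exp (-b * x ^ 2)) := by
  have h := (integrable_rpow_mul_exp_neg_mul_sq hb (s := (n : ℝ))
    (by exact_mod_cast lt_of_lt_of_le neg_one_lt_zero (Nat.cast_nonneg n))).norm
  refine h.mono' ?_ ?_
  · exact ((continuous_pow n).mul (by continuity)).aestronglyMeasurable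
  · filter_upwards with x
    simp only [Real.norm_eq_abs, norm_mul, abs_mul, abs_rpow_natCast', abs_pow, le_refl]

lemma gaussian_deriv (b x : ℝ) :
    HasDerivAt (fun x : ℝ => Real.exp (-b * x ^ 2)) (-b * (2 * x) * Real.exp (-b * x ^ 2)) x := by
  have h : HasDerivAt (fun x : ℝ => -b * x ^ 2) (-b * (2 * x)) x := by
    simpa using (hasDerivAt_pow 2 x).const_mul (-b)
  simpa [mul_comm] using h.exp

lemma moment_step {b : ℝ} (hb : 0 < b) (n : ℕ) :
    ∫ x : ℝ, x ^ (n + 2) * Real.exp (-b * x ^ 2)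
      = ((n : ℝ) + 1) / (2 * b) * ∫ x : ℝ, x ^ n * Real.exp (-b * x ^ 2) := by
  have hu : ∀ x : ℝ, HasDerivAt (fun x : ℝ => x ^ (n + 1)) (((n : ℝ) + 1) * x ^ n) x := by
    intro x; simpa using hasDerivAt_pow (n + 1) x
  have hv := fun x => gaussian_deriv b x
  have key := integral_mul_deriv_eq_deriv_mul_of_integrable
    (u := fun x : ℝ => x ^ (n + 1)) (v := fun x => Real.exp (-b * x ^ 2)) (fun x _ => hu x) (fun x _ => hv x)
    ?_ ?_ ?_
  · have l1 : ∫ x : ℝ, x ^ (n+1) * (-b * (2 * x) * Real.exp (-b * x ^ 2))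
        = (-2 * b) * ∫ x : ℝ, x ^ (n + 2) * Real.exp (-b * x ^ 2) := by
      rw [← integral_const_mul]
      congr 1; ext x; ring
    have l2 : ∫ x : ℝ, ((n : ℝ) + 1) * x ^ n * Real.exp (-b * x ^ 2)
        = ((n : ℝ) + 1) * ∫ x : ℝ, x ^ n * Real.exp (-b * x ^ 2) := by
      rw [← integral_const_mul]
      congr 1; ext x; ring
    rw [l1, l2] at key
    field_simp at key ⊢
    linarith
  · have := ((integrable_pow_mul_gaussian hb (n + 2)).const_mul (-2 * b))
    apply this.congr
    filter_upwards with x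
    simp only [Pi.mul_apply]; ring
  · have := (integrable_pow_mul_gaussian hb n).const_mul ((n : ℝ) + 1)
    apply this.congr
    filter_upwards with x
    simp only [Pi.mul_apply]; ring
  · exact (integrable_pow_mul_gaussian hb (n + 1)).congr (by filter_upwards with x; simp)

lemma moment_two {b : ℝ} (hb : 0 < b) :
    ∫ x : ℝ, x ^ 2 * Real.exp (-b * x ^ 2) = Real.sqrt (π / b) / (2 * b) := by
  have h := moment_step hb 0
  simp only [pow_zero, one_mul, Nat.cast_zero, zero_add] at h
  rw [h, integral_gaussian]; ring

lemma moment_four {b : ℝ} (hb : 0 < b) :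
    ∫ x : ℝ, x ^ 4 * Real.exp (-b * x ^ 2) = 3 * Real.sqrt (π / b) / (4 * b ^ 2) := by
  rw [show (4:ℕ) = 2 + 2 from rfl, moment_step hb 2, moment_two hb]
  push_cast
  field_simp
  ring


/-- For `y ~ N(μ, B)`, the second moment of the per-observation score with
respect to the variance parameter:
`E[((y−μ)²s(y)/B² − s(y)/B + αV^α/((α+1)^{3/2}B))²]
  = (V^{2α}/B²){2(2α²+1)/(2α+1)^{5/2} − α²/(α+1)³}`. -/
theorem variance_score_second_moment
    (μ B α : ℝ) (hB : 0 < B) (hα : 0 < α)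
    (V : ℝ) (hV : V = (2 * π * B) ^ (-(1/2) : ℝ))
    (f s : ℝ → ℝ)
    (hf : ∀ y, f y = V * Real.exp (-(y - μ) ^ 2 / (2 * B)))
    (hs : ∀ y, s y = V ^ α * Real.exp (-α * (y - μ) ^ 2 / (2 * B))) :
    ∫ y : ℝ, f y * ((y - μ) ^ 2 * s y / B ^ 2 - s y / B
        + α * V ^ α / ((α + 1) ^ ((3 : ℝ)/2) * B)) ^ 2
      = (V ^ (2 * α) / B ^ 2) * (2 * (2 * α ^ 2 + 1) / (2 * α + 1) ^ ((5 : ℝ)/2)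
          - α ^ 2 / (α + 1) ^ 3) := by
  have hπ := Real.pi_pos
  have hB' : B ≠ 0 := ne_of_gt hB
  have hw : (0:ℝ) < 2 * π * B := by positivity
  have hV0 : 0 < V := by rw [hV]; positivity
  have hp : (0:ℝ) < 2 * α + 1 := by linarith
  have hq : (0:ℝ) < α + 1 := by linarith
  set W : ℝ := V ^ α with hWdef
  set C : ℝ := α * W / ((α + 1) ^ ((3:ℝ)/2) * B) with hCdef
  set c0 : ℝ := 1 / (2 * B) with hc0def
  set c1 : ℝ := (2 * α + 1) / (2 * B) with hc1def
  set c2 : ℝ := (α + 1) / (2 * B) with hc2def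
  have hc0 : 0 < c0 := by rw [hc0def]; positivity
  have hc1 : 0 < c1 := by rw [hc1def]; positivity
  have hc2 : 0 < c2 := by rw [hc2def]; positivity
  set g : ℝ → ℝ := fun x => V * Real.exp (-x ^ 2 / (2 * B)) *
      (x ^ 2 * (W * Real.exp (-α * x ^ 2 / (2 * B))) / B ^ 2
        - W * Real.exp (-α * x ^ 2 / (2 * B)) / B + C) ^ 2 with hgdef
  have step1 : (∫ y : ℝ, f y * ((y - μ) ^ 2 * s y / B ^ 2 - s y / B + C) ^ 2)
      = ∫ x : ℝ, g x := by
    rw [← integral_sub_right_eq_self g μ]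
    congr 1
    ext y
    rw [hf y, hs y, hgdef]
  rw [step1]
  have key : ∀ x : ℝ, g x
      = (V * W ^ 2 / B ^ 4) * (x ^ 4 * Real.exp (-c1 * x ^ 2))
        + (-2 * V * W ^ 2 / B ^ 3) * (x ^ 2 * Real.exp (-c1 * x ^ 2))
        + (V * W ^ 2 / B ^ 2) * Real.exp (-c1 * x ^ 2)
        + (2 * C * V * W / B ^ 2) * (x ^ 2 * Real.exp (-c2 * x ^ 2))
        + (-2 * C * V * W / B) * Real.exp (-c2 * x ^ 2)
        + (C ^ 2 * V) * Real.exp (-c0 * x ^ 2) := by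
    intro x
    have e1 : Real.exp (-x ^ 2 / (2 * B)) *
        (Real.exp (-α * x ^ 2 / (2 * B)) * Real.exp (-α * x ^ 2 / (2 * B)))
        = Real.exp (-c1 * x ^ 2) := by
      rw [← Real.exp_add, ← Real.exp_add, hc1def]
      congr 1; field_simp; ring
    have e2 : Real.exp (-x ^ 2 / (2 * B)) * Real.exp (-α * x ^ 2 / (2 * B))
        = Real.exp (-c2 * x ^ 2) := by
      rw [← Real.exp_add, hc2def]
      congr 1; field_simp; ring
    have e0 : Real.exp (-x ^ 2 / (2 * B)) = Real.exp (-c0 * x ^ 2) := by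
      rw [hc0def]; congr 1; field_simp
    rw [hgdef, ← e1, ← e2, ← e0]
    ring
  simp only [key]
  have i1 : Integrable (fun x : ℝ => (V * W ^ 2 / B ^ 4) * (x ^ 4 * Real.exp (-c1 * x ^ 2))) :=
    (integrable_pow_mul_gaussian hc1 4).const_mul _
  have i2 : Integrable (fun x : ℝ => (-2 * V * W ^ 2 / B ^ 3) * (x ^ 2 * Real.exp (-c1 * x ^ 2))) :=
    (integrable_pow_mul_gaussian hc1 2).const_mul _
  have i3 : Integrable (fun x : ℝ => (V * W ^ 2 / B ^ 2) * Real.exp (-c1 * x ^ 2)) :=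
    (integrable_exp_neg_mul_sq hc1).const_mul _
  have i4 : Integrable (fun x : ℝ => (2 * C * V * W / B ^ 2) * (x ^ 2 * Real.exp (-c2 * x ^ 2))) :=
    (integrable_pow_mul_gaussian hc2 2).const_mul _
  have i5 : Integrable (fun x : ℝ => (-2 * C * V * W / B) * Real.exp (-c2 * x ^ 2)) :=
    (integrable_exp_neg_mul_sq hc2).const_mul _
  have i6 : Integrable (fun x : ℝ => (C ^ 2 * V) * Real.exp (-c0 * x ^ 2)) :=
    (integrable_exp_neg_mul_sq hc0).const_mul _
  have j12 : Integrable (fun x : ℝ => V * W ^ 2 / B ^ 4 * (x ^ 4 * Real.exp (-c1 * x ^ 2)) + -2 * V * W ^ 2 / B ^ 3 * (x ^ 2 * Real.exp (-c1 * x ^ 2))) := i1.add i2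
  have j13 : Integrable (fun x : ℝ => V * W ^ 2 / B ^ 4 * (x ^ 4 * Real.exp (-c1 * x ^ 2)) + -2 * V * W ^ 2 / B ^ 3 * (x ^ 2 * Real.exp (-c1 * x ^ 2)) + V * W ^ 2 / B ^ 2 * Real.exp (-c1 * x ^ 2)) := j12.add i3
  have j14 : Integrable (fun x : ℝ => V * W ^ 2 / B ^ 4 * (x ^ 4 * Real.exp (-c1 * x ^ 2)) + -2 * V * W ^ 2 / B ^ 3 * (x ^ 2 * Real.exp (-c1 * x ^ 2)) + V * W ^ 2 / B ^ 2 * Real.exp (-c1 * x ^ 2) + 2 * C * V * W / B ^ 2 * (x ^ 2 * Real.exp (-c2 * x ^ 2))) := j13.add i4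
  have j15 : Integrable (fun x : ℝ => V * W ^ 2 / B ^ 4 * (x ^ 4 * Real.exp (-c1 * x ^ 2)) + -2 * V * W ^ 2 / B ^ 3 * (x ^ 2 * Real.exp (-c1 * x ^ 2)) + V * W ^ 2 / B ^ 2 * Real.exp (-c1 * x ^ 2) + 2 * C * V * W / B ^ 2 * (x ^ 2 * Real.exp (-c2 * x ^ 2)) + -2 * C * V * W / B * Real.exp (-c2 * x ^ 2)) := j14.add i5
  rw [integral_add j15 i6, integral_add j14 i5, integral_add j13 i4,
    integral_add j12 i3, integral_add i1 i2,
    integral_const_mul, integral_const_mul, integral_const_mul, integral_const_mul,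
    integral_const_mul, integral_const_mul,
    moment_four hc1, moment_two hc1, integral_gaussian, moment_two hc2,
    integral_gaussian, integral_gaussian]
  have hsW : Real.sqrt (2 * π * B) = 1 / V := by
    rw [hV, Real.sqrt_eq_rpow, Real.rpow_neg hw.le]
    simp
  have hS2sq : Real.sqrt (α + 1) ^ 2 = α + 1 := Real.sq_sqrt hq.le
  have hS1pos : 0 < Real.sqrt (2 * α + 1) := Real.sqrt_pos.mpr hp
  have hS2pos : 0 < Real.sqrt (α + 1) := Real.sqrt_pos.mpr hq
  have h1 : Real.sqrt (π / c1) = 1 / V / Real.sqrt (2 * α + 1) := by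
    rw [hc1def, show π / ((2 * α + 1) / (2 * B)) = (2 * π * B) / (2 * α + 1) by
      field_simp, Real.sqrt_div hw.le, hsW]
  have h2 : Real.sqrt (π / c2) = 1 / V / Real.sqrt (α + 1) := by
    rw [hc2def, show π / ((α + 1) / (2 * B)) = (2 * π * B) / (α + 1) by
      field_simp, Real.sqrt_div hw.le, hsW]
  have h0 : Real.sqrt (π / c0) = 1 / V := by
    rw [hc0def, show π / (1 / (2 * B)) = 2 * π * B by field_simp, hsW]
  have h52 : (2 * α + 1) ^ ((5:ℝ)/2) = (2 * α + 1) ^ 2 * Real.sqrt (2 * α + 1) := by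
    rw [show ((5:ℝ)/2) = ((2:ℕ):ℝ) + 1/2 by norm_num, Real.rpow_add hp,
      Real.rpow_natCast, Real.sqrt_eq_rpow]
  have h32 : (α + 1) ^ ((3:ℝ)/2) = (α + 1) * Real.sqrt (α + 1) := by
    rw [show ((3:ℝ)/2) = ((1:ℕ):ℝ) + 1/2 by norm_num, Real.rpow_add hq,
      Real.rpow_natCast, Real.sqrt_eq_rpow, pow_one]
  have hV2 : V ^ (2 * α) = W ^ 2 := by
    rw [show (2 * α) = α * ((2:ℕ):ℝ) by push_cast; ring, Real.rpow_mul hV0.le,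
      Real.rpow_natCast, hWdef]
  have hC2 : C = α * W * Real.sqrt (α + 1) / ((α + 1) ^ 2 * B) := by
    rw [hCdef, h32, div_eq_div_iff (by positivity) (by positivity)]
    rw [show α * W * ((α + 1) ^ 2 * B) = α * W * (α+1) * B * (α+1) by ring,
      show α * W * Real.sqrt (α + 1) * ((α + 1) * Real.sqrt (α + 1) * B)
        = α * W * (α+1) * B * (Real.sqrt (α+1) * Real.sqrt (α+1)) by ring,
      Real.mul_self_sqrt hq.le]
  have hCC : C * C = α ^ 2 * W ^ 2 / ((α + 1) ^ 3 * B ^ 2) := by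
    rw [hCdef, h32, div_mul_div_comm]
    rw [show (α + 1) * Real.sqrt (α + 1) * B * ((α + 1) * Real.sqrt (α + 1) * B)
        = (α + 1) ^ 2 * (Real.sqrt (α + 1) * Real.sqrt (α + 1)) * B ^ 2 by ring,
      Real.mul_self_sqrt hq.le]
    congr 1 <;> ring
  rw [h1, h2, h0, pow_two C, hCC, hC2, hc1def, hc2def, hV2, h52]
  have hS1ne : Real.sqrt (2 * α + 1) ≠ 0 := ne_of_gt hS1pos
  have hS2ne : Real.sqrt (α + 1) ≠ 0 := ne_of_gt hS2pos
  field_simp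
  ring
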